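/- Let ψ_K(z) = z + √(1+z²). For every n ≥ 2 there is a polynomial Q of degree at most 3(n−2) such that the n-th derivative satisfies ψ_K^(n) = Q(ψ_K)·ψ_K·ψ_K' / (1 + ψ_K²)^{2(n−1)}. Consequently, for each n ≥ 2, the functions ψ_K^(n), ψ_K^(n)/ψ_K and ψ_K^(n)/(ψ_K·ψ_K') are bounded on ℝ. -/

import Mathlib

open Real Polynomial

/-- The Kaniadakis 1-exponential `ψ_K(z) = z + √(1+z²)`. -/
noncomputable def psiK (z : ℝ) : ℝ := z + Real.sqrt (1 + z ^ 2)

/-!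
Write `v = 1 + ψ²`. Since `ψ' = 2ψ²/v`, differentiating `P(ψ)/vʲ` for a polynomial `P` gives
`2ψ²(P'(ψ)·v − 2jψP(ψ))/v^{j+2}`, again of the same shape. Starting from `ψ'' = 8ψ³/v³`, this
shows `ψ⁽ᵏ⁺²⁾ = 2ψ³Q_k(ψ)/v^{2k+3} = Q_k(ψ)·ψ·ψ'/v^{2k+2}`, where each step raises the degree of
`Q_k` by at most `3`. Since `deg Q_k ≤ 3k ≤ 2(2k+1)`, the quotient `Q_k(ψ)/v^{2k+2}` is
`O(1/v)`, which absorbs the factors `ψ' ≤ 2` and `ψψ' ≤ 2v`.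
-/

theorem natDegree_X_mul_derivative_le {R : Type*} [Semiring R] (p : R[X]) :
    (X * derivative p).natDegree ≤ p.natDegree := by
  rcases eq_or_ne p.natDegree 0 with h | h
  · simp [derivative_of_natDegree_zero h]
  · calc (X * derivative p).natDegree ≤ 1 + (p.natDegree - 1) :=
          natDegree_mul_le.trans (add_le_add natDegree_X_le (natDegree_derivative_le p))
      _ = p.natDegree := by omega

theorem abs_pow_le_one_add_sq_pow (u : ℝ) {i D : ℕ} (h : i ≤ 2 * D) :
    |u| ^ i ≤ (1 + u ^ 2) ^ D := by
  rcases le_total |u| 1 with h1 | h1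
  · calc |u| ^ i ≤ 1 := pow_le_one₀ (abs_nonneg u) h1
      _ ≤ (1 + u ^ 2) ^ D := one_le_pow₀ (by nlinarith)
  · calc |u| ^ i ≤ |u| ^ (2 * D) := pow_le_pow_right₀ h1 h
      _ = (u ^ 2) ^ D := by rw [pow_mul, sq_abs]
      _ ≤ (1 + u ^ 2) ^ D := pow_le_pow_left₀ (by positivity) (by linarith) D

theorem exists_abs_eval_le_mul_one_add_sq_pow (Q : ℝ[X]) {D : ℕ} (hQ : Q.natDegree ≤ 2 * D) :
    ∃ S, ∀ u : ℝ, |Q.eval u| ≤ S * (1 + u ^ 2) ^ D := by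
  refine ⟨∑ i ∈ Finset.range (Q.natDegree + 1), |Q.coeff i|, fun u => ?_⟩
  rw [eval_eq_sum_range, Finset.sum_mul]
  refine (Finset.abs_sum_le_sum_abs _ _).trans (Finset.sum_le_sum fun i hi => ?_)
  rw [abs_mul, abs_pow]
  have hi : i ≤ 2 * D := by rw [Finset.mem_range] at hi; omega
  exact mul_le_mul_of_nonneg_left (abs_pow_le_one_add_sq_pow u hi) (abs_nonneg _)

theorem exists_abs_eval_div_one_add_sq_pow_le (Q : ℝ[X]) {D : ℕ} (hQ : Q.natDegree ≤ 2 * D) :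
    ∃ S, ∀ u : ℝ, |Q.eval u / (1 + u ^ 2) ^ (D + 1)| ≤ S / (1 + u ^ 2) := by
  obtain ⟨S, hS⟩ := exists_abs_eval_le_mul_one_add_sq_pow Q hQ
  refine ⟨S, fun u => ?_⟩
  have hv : 0 < 1 + u ^ 2 := by positivity
  rw [abs_div, abs_of_pos (pow_pos hv _), div_le_div_iff₀ (pow_pos hv _) hv,
    pow_succ (1 + u ^ 2) D, ← mul_assoc]
  exact mul_le_mul_of_nonneg_right (hS u) hv.le

theorem psiK_pos (z : ℝ) : 0 < psiK z := by
  have h : |z| < Real.sqrt (1 + z ^ 2) := by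
    rw [← Real.sqrt_sq_eq_abs]
    exact Real.sqrt_lt_sqrt (sq_nonneg z) (by linarith)
  unfold psiK; linarith [neg_abs_le z]

theorem one_add_psiK_sq (z : ℝ) : 1 + psiK z ^ 2 = 2 * Real.sqrt (1 + z ^ 2) * psiK z := by
  have hs : Real.sqrt (1 + z ^ 2) ^ 2 = 1 + z ^ 2 := Real.sq_sqrt (by positivity)
  unfold psiK; nlinarith [hs]

theorem hasDerivAt_psiK (z : ℝ) : HasDerivAt psiK (2 * psiK z ^ 2 / (1 + psiK z ^ 2)) z := by
  have hpos : (0:ℝ) < 1 + z ^ 2 := by positivity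
  have h1 : HasDerivAt (fun z : ℝ => 1 + z ^ 2) (2 * z) z := by
    simpa using (hasDerivAt_pow 2 z).const_add 1
  have h2 : HasDerivAt psiK (1 + 2 * z / (2 * Real.sqrt (1 + z ^ 2))) z :=
    (hasDerivAt_id z).add (h1.sqrt hpos.ne')
  convert h2 using 1
  rw [one_add_psiK_sq]
  have hψ := psiK_pos z
  unfold psiK at *
  field_simp
  ring

theorem deriv_psiK (z : ℝ) : deriv psiK z = 2 * psiK z ^ 2 / (1 + psiK z ^ 2) :=
  (hasDerivAt_psiK z).deriv

theorem deriv_psiK_pos (z : ℝ) : 0 < deriv psiK z := by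
  rw [deriv_psiK]; have := psiK_pos z; positivity

theorem deriv_psiK_le_two (z : ℝ) : deriv psiK z ≤ 2 := by
  rw [deriv_psiK, div_le_iff₀ (by positivity)]; nlinarith

theorem psiK_mul_deriv_psiK_le (z : ℝ) : psiK z * deriv psiK z ≤ 2 * (1 + psiK z ^ 2) := by
  have hψ := psiK_pos z
  rw [deriv_psiK, mul_div_assoc', div_le_iff₀ (by positivity)]
  nlinarith [sq_nonneg (psiK z ^ 2 - psiK z), sq_nonneg (psiK z - 1)]

theorem abs_mul_psiK_mul_deriv_psiK_le {r S : ℝ} (z : ℝ) (hr : |r| * (1 + psiK z ^ 2) ≤ S) :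
    |r * (psiK z * deriv psiK z)| ≤ 2 * S ∧ |r * deriv psiK z| ≤ 2 * S ∧ |r| ≤ 2 * S := by
  have hψ := psiK_pos z
  have hψ' := deriv_psiK_pos z
  simp only [abs_mul, abs_of_pos hψ, abs_of_pos hψ']
  have hr₀ := abs_nonneg r
  have hrS : |r| ≤ S := by nlinarith
  refine ⟨?_, ?_, by linarith⟩
  · nlinarith [mul_le_mul_of_nonneg_left (psiK_mul_deriv_psiK_le z) hr₀]
  · nlinarith [mul_le_mul_of_nonneg_left (deriv_psiK_le_two z) hr₀]

noncomputable def psiKDerivNumerator (P : ℝ[X]) (j : ℕ) : ℝ[X] :=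
  2 * X ^ 2 * (derivative P * (1 + X ^ 2) - 2 * (j : ℝ[X]) * X * P)

theorem hasDerivAt_eval_psiK_div_pow (P : ℝ[X]) (j : ℕ) (z : ℝ) :
    HasDerivAt (fun z => P.eval (psiK z) / (1 + psiK z ^ 2) ^ j)
      ((psiKDerivNumerator P j).eval (psiK z) / (1 + psiK z ^ 2) ^ (j + 2)) z := by
  have hψ := hasDerivAt_psiK z
  have hnum : HasDerivAt (fun z => P.eval (psiK z)) _ z := (P.hasDerivAt (psiK z)).comp z hψ
  have hden : HasDerivAt (fun z => (1 + psiK z ^ 2) ^ j) _ z :=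
    ((hψ.fun_pow 2).const_add 1).fun_pow j
  have hv : 0 < 1 + psiK z ^ 2 := by positivity
  refine (hnum.fun_div hden (pow_pos hv j).ne').congr_deriv ?_
  simp only [psiKDerivNumerator, eval_mul, eval_sub, eval_add, eval_pow, eval_ofNat,
    eval_natCast, eval_X, eval_one]
  rcases j with _ | j
  · field_simp; ring
  · simp only [Nat.add_sub_cancel]; push_cast; field_simp; ring

noncomputable def psiKDerivPoly : ℕ → ℝ[X]
  | 0 => 4
  | k + 1 =>
    (6 * psiKDerivPoly k + 2 * (X * derivative (psiKDerivPoly k))) * (X * (1 + X ^ 2))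
      - (4 * (2 * k + 3) : ℝ[X]) * X ^ 3 * psiKDerivPoly k

theorem natDegree_psiKDerivPoly_le (k : ℕ) : (psiKDerivPoly k).natDegree ≤ 3 * k := by
  induction k with
  | zero => simp [psiKDerivPoly]
  | succ k ih =>
    have hD := (natDegree_X_mul_derivative_le (psiKDerivPoly k)).trans ih
    rw [psiKDerivPoly]
    generalize X * derivative (psiKDerivPoly k) = D at hD
    compute_degree
    omega

theorem psiKDerivNumerator_two_mul_X_pow_three_mul (k : ℕ) :
    psiKDerivNumerator (2 * X ^ 3 * psiKDerivPoly k) (2 * k + 3)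
      = 2 * X ^ 3 * psiKDerivPoly (k + 1) := by
  simp only [psiKDerivNumerator, psiKDerivPoly, derivative_mul, derivative_ofNat,
    derivative_X_pow, map_natCast]
  push_cast
  ring

theorem iteratedDeriv_add_two_psiK (k : ℕ) :
    iteratedDeriv (k + 2) psiK
      = fun z => (2 * X ^ 3 * psiKDerivPoly k).eval (psiK z) / (1 + psiK z ^ 2) ^ (2 * k + 3) := by
  induction k with
  | zero =>
    have h1 : deriv psiK = fun z => (2 * X ^ 2 : ℝ[X]).eval (psiK z) / (1 + psiK z ^ 2) ^ 1 := by
      funext z; simp [deriv_psiK]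
    have h2 : psiKDerivNumerator (2 * X ^ 2) 1 = 2 * X ^ 3 * psiKDerivPoly 0 := by
      simp only [psiKDerivNumerator, psiKDerivPoly, derivative_mul, derivative_ofNat,
        derivative_X_pow, map_natCast]
      push_cast
      ring
    rw [iteratedDeriv_succ, iteratedDeriv_one, h1]
    funext z
    rw [(hasDerivAt_eval_psiK_div_pow _ 1 z).deriv, h2]
  | succ k ih =>
    rw [iteratedDeriv_succ, ih]
    funext z
    rw [(hasDerivAt_eval_psiK_div_pow _ _ z).deriv, psiKDerivNumerator_two_mul_X_pow_three_mul,
      show 2 * (k + 1) + 3 = 2 * k + 3 + 2 by ring]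

theorem iteratedDeriv_add_two_psiK_eq (k : ℕ) (z : ℝ) :
    iteratedDeriv (k + 2) psiK z
      = (psiKDerivPoly k).eval (psiK z) * psiK z * deriv psiK z
          / (1 + psiK z ^ 2) ^ (2 * k + 2) := by
  rw [iteratedDeriv_add_two_psiK, deriv_psiK]
  simp only [eval_mul, eval_pow, eval_ofNat, eval_X]
  field_simp
  ring

/-- For every `n ≥ 2` there is a polynomial `Q` of degree at most `3(n−2)` with
`ψ_K⁽ⁿ⁾ = Q(ψ_K)·ψ_K·ψ_K' / (1+ψ_K²)^{2(n−1)}`; consequently `ψ_K⁽ⁿ⁾`, `ψ_K⁽ⁿ⁾/ψ_K`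
and `ψ_K⁽ⁿ⁾/(ψ_K·ψ_K')` are bounded on `ℝ`. -/
theorem psiK_higher_derivatives :
    ∀ n : ℕ, 2 ≤ n →
      (∃ Q : Polynomial ℝ, Q.natDegree ≤ 3 * (n - 2) ∧
        ∀ z : ℝ, iteratedDeriv n psiK z
          = Q.eval (psiK z) * psiK z * deriv psiK z / (1 + psiK z ^ 2) ^ (2 * (n - 1))) ∧
      (∃ C : ℝ, ∀ z : ℝ,
        |iteratedDeriv n psiK z| ≤ C ∧
        |iteratedDeriv n psiK z / psiK z| ≤ C ∧
        |iteratedDeriv n psiK z / (psiK z * deriv psiK z)| ≤ C) := by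
  intro n hn
  obtain ⟨k, rfl⟩ : ∃ k, n = k + 2 := ⟨n - 2, by omega⟩
  rw [show k + 2 - 2 = k by omega, show 2 * (k + 2 - 1) = 2 * k + 2 by omega]
  refine ⟨⟨psiKDerivPoly k, natDegree_psiKDerivPoly_le k, iteratedDeriv_add_two_psiK_eq k⟩, ?_⟩
  obtain ⟨S, hS⟩ := exists_abs_eval_div_one_add_sq_pow_le (psiKDerivPoly k) (D := 2 * k + 1)
    (by have := natDegree_psiKDerivPoly_le k; omega)
  refine ⟨2 * S, fun z => ?_⟩
  set r := (psiKDerivPoly k).eval (psiK z) / (1 + psiK z ^ 2) ^ (2 * k + 2)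
  have hψ := psiK_pos z
  have hψ' := deriv_psiK_pos z
  have hr : |r| * (1 + psiK z ^ 2) ≤ S := (le_div_iff₀ (by positivity)).1 (hS (psiK z))
  have hd : iteratedDeriv (k + 2) psiK z = r * (psiK z * deriv psiK z) := by
    rw [iteratedDeriv_add_two_psiK_eq]; ring
  have hd₁ : iteratedDeriv (k + 2) psiK z / psiK z = r * deriv psiK z := by
    rw [hd]; field_simp
  have hd₂ : iteratedDeriv (k + 2) psiK z / (psiK z * deriv psiK z) = r := by
    rw [hd]; field_simp
  rw [hd₁, hd₂, hd]
  exact abs_mul_psiK_mul_deriv_psiK_le z hr
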